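/- Let X be a topological space, G a group acting on X, and F : X → ℝ an upper semicontinuous function that is G-invariant, i.e. F(g • x) = F(x) for all g ∈ G and x ∈ X. Assume F(x) ≥ 0 for all x and that F(y₀) = 0 for some y₀ ∈ X. Then F(x₀) = 0 for every point x₀ ∈ X whose orbit {g • x₀ : g ∈ G} is dense in X. (This is the abstract form of the paper's Theorem 2.1: if the Kobayashi pseudometric of a compact complex manifold vanishes for one complex structure, then it vanishes for every ergodic complex structure in the same deformation class.) -/

import Mathlib

/-- If `F` were larger at `x₀` than at `y`, the open set `{F < F x₀}` would contain `y`, hence a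
point `g • x₀` of the dense orbit, where `F` takes the value `F x₀`. -/
theorem UpperSemicontinuous.le_of_dense_orbit {X G α : Type*} [TopologicalSpace X] [Group G]
    [MulAction G X] [LinearOrder α] {F : X → α} (hF : UpperSemicontinuous F)
    (hinv : ∀ (g : G) (x : X), F (g • x) = F x) {x₀ : X} (hx₀ : Dense (MulAction.orbit G x₀))
    (y : X) : F x₀ ≤ F y := by
  by_contra! hy
  obtain ⟨_, ⟨g, rfl⟩, hg⟩ := hx₀.exists_mem_open (hF.isOpen_preimage (F x₀)) ⟨y, hy⟩
  exact lt_irrefl (F x₀) (hinv g x₀ ▸ hg)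

/-- Abstract form of Theorem 2.1: if a nonnegative, upper semicontinuous,
`G`-invariant function vanishes somewhere, it vanishes at every point with
dense orbit. -/
theorem usc_invariant_vanishes_at_ergodic
    {X : Type*} [TopologicalSpace X] {G : Type*} [Group G] [MulAction G X]
    (F : X → ℝ)
    (husc : ∀ α : ℝ, IsOpen {x : X | F x < α})
    (hinv : ∀ (g : G) (x : X), F (g • x) = F x)
    (hnonneg : ∀ x : X, 0 ≤ F x)
    (y₀ : X) (hzero : F y₀ = 0)
    (x₀ : X) (hdense : Dense {x : X | ∃ g : G, g • x₀ = x}) :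
    F x₀ = 0 := by
  have hF : UpperSemicontinuous F := upperSemicontinuous_iff_isOpen_preimage.2 husc
  have hle : F x₀ ≤ F y₀ := hF.le_of_dense_orbit hinv hdense y₀
  exact le_antisymm (hzero ▸ hle) (hnonneg x₀)
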